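/- arXiv:2111.12839 — 5 statements merged into one kernel-verified Lean document; each statement's English description precedes it below -/
import Mathlib

section
/- Let b, c be real numbers. Define the aerated Catalan numbers C₀₁ : ℕ → ℕ by C₀₁(μ) = Catalan(μ/2) if μ is even and C₀₁(μ) = 0 if μ is odd, where Catalan(k) is the k-th Catalan number, and define the (0,1)-bc-Motzkin numbers by M̃₀₁(n;b,c) = Σ_{μ=0}^{n} binom(n,μ)·C₀₁(μ)·b^{n−μ}·c^{μ}. Then for every n ≥ 1: M̃₀₁(n;b,c) − b·M̃₀₁(n−1;b,c) = c² · Σ_{α+β=n−2} M̃₀₁(α;b,c)·M̃₀₁(β;b,c), where the sum on the right ranges over pairs of nonnegative integers α, β with α+β = n−2 (and is empty when n = 1). -/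
/-- The aerated Catalan numbers: `C₀₁(μ) = Catalan(μ/2)` if `μ` is even, `0` if odd. -/
def aeratedCatalan (μ : ℕ) : ℕ := if Even μ then catalan (μ / 2) else 0

/-- The `(0,1)`-`bc`-Motzkin numbers:
`M̃₀₁(n; b, c) = ∑_{μ=0}^{n} binom(n,μ) · C₀₁(μ) · b^{n−μ} · c^{μ}`. -/
noncomputable def bcMotzkin01 (b c : ℝ) (n : ℕ) : ℝ :=
  ∑ μ ∈ Finset.range (n + 1),
    (Nat.choose n μ : ℝ) * (aeratedCatalan μ : ℝ) * b ^ (n - μ) * c ^ μ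

/-!
The Motzkin-type numbers are the binomial transform `T_n(a) = ∑ binom(n,i) b^{n-i} [X^i] a`
of the series `a(X) = Cat(c²X²)`, where `Cat = 1 + X·Cat²` is the Catalan series; hence
`a = 1 + c²X²a²`.
Pascal's rule gives `T_{n+1}(r + X f) = b·T_n(r + X f) + T_n(f)`, so the left-hand side is
`c²·T_{n-1}(X a²)`. The transform turns products into convolutions,
`∑_{α+β=m} T_α(f) T_β(g) = T_{m+1}(X f g)`, by induction on `m` using the same Pascal step.
-/

open Finset PowerSeries

section BinomialTransform

variable {R : Type*} [CommSemiring R] (b : R)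

noncomputable def binomialTransform (n : ℕ) : R⟦X⟧ →ₗ[R] R :=
  ∑ p ∈ antidiagonal n, (n.choose p.1 * b ^ p.2 : R) • coeff p.1

lemma binomialTransform_apply (n : ℕ) (f : R⟦X⟧) :
    binomialTransform b n f =
      ∑ p ∈ antidiagonal n, (n.choose p.1 : R) * (coeff p.1 f * b ^ p.2) := by
  simp only [binomialTransform, LinearMap.sum_apply, LinearMap.smul_apply, smul_eq_mul]
  exact sum_congr rfl fun _ _ ↦ by ring

lemma binomialTransform_zero (f : R⟦X⟧) : binomialTransform b 0 f = constantCoeff f := by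
  simp [binomialTransform_apply]

lemma binomialTransform_succ (n : ℕ) (f : R⟦X⟧) :
    binomialTransform b (n + 1) f =
      b * binomialTransform b n f + binomialTransform b n (mk fun p ↦ coeff (p + 1) f) := by
  rw [binomialTransform_apply, sum_antidiagonal_choose_succ_mul (fun i j ↦ coeff i f * b ^ j),
    binomialTransform_apply, binomialTransform_apply, mul_sum]
  congr 1
  · exact sum_congr rfl fun _ _ ↦ by ring
  · refine sum_congr rfl fun p hp ↦ ?_
    rw [Nat.choose_symm_of_eq_add (mem_antidiagonal.1 hp).symm, coeff_mk]

lemma binomialTransform_succ_C_add_X_mul (n : ℕ) (r : R) (f : R⟦X⟧) :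
    binomialTransform b (n + 1) (C r + X * f) =
      b * binomialTransform b n (C r + X * f) + binomialTransform b n f := by
  rw [binomialTransform_succ]
  congr 2
  ext p
  simp [coeff_succ_X_mul]

lemma sum_antidiagonal_binomialTransform_mul (n : ℕ) (f g : R⟦X⟧) :
    ∑ p ∈ antidiagonal n, binomialTransform b p.1 f * binomialTransform b p.2 g =
      binomialTransform b (n + 1) (X * (f * g)) := by
  have X_mul_succ (m : ℕ) (h : R⟦X⟧) : binomialTransform b (m + 1) (X * h) =
      b * binomialTransform b m (X * h) + binomialTransform b m h := by
    simpa using binomialTransform_succ_C_add_X_mul b m 0 h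
  induction n generalizing f with
  | zero => simp [X_mul_succ, binomialTransform_zero]
  | succ n ih =>
    obtain ⟨r, f, rfl⟩ : ∃ r f', f = C r + X * f' :=
      ⟨_, _, (eq_X_mul_shift_add_const f).trans (add_comm _ _)⟩
    rw [Nat.sum_antidiagonal_succ]
    simp only [binomialTransform_succ_C_add_X_mul, add_mul, sum_add_distrib, mul_assoc, ← mul_sum,
      ih, binomialTransform_zero]
    rw [X_mul_succ (n + 1), map_add (binomialTransform b (n + 1)), ← smul_eq_C_mul, map_smul]
    simp only [map_add, constantCoeff_C, map_mul, constantCoeff_X, zero_mul, add_zero, smul_eq_mul]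
    ring

lemma sum_range_binomialTransform_mul (n : ℕ) (f g : R⟦X⟧) :
    ∑ α ∈ range n, binomialTransform b α f * binomialTransform b (n - 1 - α) g =
      binomialTransform b n (X * (f * g)) := by
  cases n with
  | zero => simp [binomialTransform_zero]
  | succ n =>
    rw [← sum_antidiagonal_binomialTransform_mul, Nat.sum_antidiagonal_eq_sum_range_succ_mk]
    simp only [Nat.add_sub_cancel]

end BinomialTransform

section AeratedCatalanSeries

variable {R : Type*} [CommRing R] (c : R)

noncomputable def aeratedCatalanSeries : R⟦X⟧ :=
  rescale c (expand 2 two_ne_zero (catalanSeries.map (Nat.castRingHom R)))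

lemma coeff_aeratedCatalanSeries (μ : ℕ) :
    coeff μ (aeratedCatalanSeries c) = c ^ μ * aeratedCatalan μ := by
  simp only [aeratedCatalanSeries, coeff_rescale, coeff_expand, coeff_map, catalanSeries_coeff,
    aeratedCatalan, even_iff_two_dvd]
  split_ifs <;> simp

lemma aeratedCatalanSeries_eq_C_one_add_X_mul :
    aeratedCatalanSeries c = C 1 + X * (C (c ^ 2) * (X * aeratedCatalanSeries c ^ 2)) := by
  have h := congrArg (fun f ↦ rescale c (expand 2 two_ne_zero (f.map (Nat.castRingHom R))))
    catalanSeries_sq_mul_X_add_one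
  simp only [map_add, map_mul, map_pow, map_X, map_one, expand_X, rescale_X] at h
  change aeratedCatalanSeries c ^ 2 * _ + _ = aeratedCatalanSeries c at h
  rw [map_one, map_pow]
  linear_combination -h

end AeratedCatalanSeries

lemma bcMotzkin01_eq_binomialTransform (b c : ℝ) (n : ℕ) :
    bcMotzkin01 b c n = binomialTransform b n (aeratedCatalanSeries c) := by
  rw [bcMotzkin01, binomialTransform_apply, Nat.sum_antidiagonal_eq_sum_range_succ_mk]
  exact sum_congr rfl fun μ _ ↦ by rw [coeff_aeratedCatalanSeries]; ring

/-- Recursion for the `(0,1)`-`bc`-Motzkin numbers: for every `n ≥ 1`,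
`M̃₀₁(n;b,c) − b·M̃₀₁(n−1;b,c) = c² · ∑_{α+β=n−2} M̃₀₁(α;b,c)·M̃₀₁(β;b,c)`,
where the sum ranges over nonnegative integers `α, β` with `α + β = n − 2`
(hence is empty when `n = 1`). -/
theorem bcMotzkin01_recursion (b c : ℝ) (n : ℕ) (hn : 1 ≤ n) :
    bcMotzkin01 b c n - b * bcMotzkin01 b c (n - 1)
      = c ^ 2 * ∑ α ∈ Finset.range (n - 1),
          bcMotzkin01 b c α * bcMotzkin01 b c (n - 2 - α) := by
  obtain ⟨k, rfl⟩ := Nat.exists_eq_add_of_le' hn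
  have hstep := binomialTransform_succ_C_add_X_mul b k 1
    (C (c ^ 2) * (X * aeratedCatalanSeries c ^ 2))
  rw [← aeratedCatalanSeries_eq_C_one_add_X_mul] at hstep
  simp only [bcMotzkin01_eq_binomialTransform, Nat.add_sub_cancel, show k + 1 - 2 = k - 1 by omega]
  rw [hstep, add_sub_cancel_left, ← smul_eq_C_mul, map_smul, smul_eq_mul,
    sq (aeratedCatalanSeries c), sum_range_binomialTransform_mul]
end

section
/- Let b, c be real numbers, let f : ℕ → ℝ be any function, and let n₁, n_j ≥ 1 be natural numbers. Then Σ_{μ₁=1}^{n₁} Σ_{μⱼ=1}^{n_j} binom(n₁−1, μ₁−1)·binom(n_j, μⱼ)·μⱼ·f(μ₁+μⱼ−2)·b^{(n₁+n_j)−(μ₁+μⱼ)}·c^{μ₁+μⱼ} = c²·n_j·Σ_{k=0}^{n₁+n_j−2} binom(n₁+n_j−2, k)·f(k)·b^{(n₁+n_j−2)−k}·c^{k}. -/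
/-!
Absorption, `C(n_j, μ_j) μ_j = n_j C(n_j - 1, μ_j - 1)`, pulls out `c² n_j`. After shifting both
indices down by one, the rest of the summand is `C(n₁ - 1, a) C(n_j - 1, d) g(a + d)`, so grouping
by `k = a + d` and applying Vandermonde's identity collapses the double sum.
-/

open Finset

theorem sum_Icc_one_eq_sum_range {M : Type*} [AddCommMonoid M] (g : ℕ → M) (n : ℕ) :
    ∑ i ∈ Icc 1 n, g i = ∑ i ∈ range n, g (i + 1) := by
  rw [range_eq_Ico, sum_Ico_add' g 0 n 1, zero_add, Ico_add_one_right_eq_Icc]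

theorem sum_range_choose_mul_choose_mul_apply_add {R : Type*} [CommSemiring R] (m n : ℕ)
    (h : ℕ → R) :
    ∑ a ∈ range (m + 1), ∑ d ∈ range (n + 1), (m.choose a * n.choose d : R) * h (a + d)
      = ∑ k ∈ range (m + n + 1), ((m + n).choose k : R) * h k := by
  rw [← sum_product', ← sum_fiberwise_of_maps_to (g := fun p ↦ p.1 + p.2) (t := range (m + n + 1))
    (fun p hp ↦ by simp only [mem_product, mem_range] at hp ⊢; omega)]
  refine sum_congr rfl fun k _ ↦ ?_
  rw [Nat.add_choose_eq, Nat.cast_sum, sum_mul]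
  refine sum_subset_zero_on_sdiff (fun p hp ↦ ?_) (fun p hp ↦ ?_) (fun p hp ↦ ?_)
  · simp only [mem_filter] at hp; simpa using hp.2
  · simp only [mem_sdiff, HasAntidiagonal.mem_antidiagonal, mem_filter, mem_product, mem_range,
      not_and] at hp
    obtain h | h : m < p.1 ∨ n < p.2 := by omega
    all_goals simp [Nat.choose_eq_zero_of_lt h]
  · simp only [mem_filter] at hp
    rw [hp.2]; push_cast; rfl

theorem bcMotzkin_termI_general (b c : ℝ) (f : ℕ → ℝ) (n₁ nj : ℕ) (h₁ : 1 ≤ n₁) :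
    ∑ μ₁ ∈ Finset.Icc 1 n₁, ∑ μj ∈ Finset.Icc 1 nj,
        (Nat.choose (n₁ - 1) (μ₁ - 1) : ℝ) * (Nat.choose nj μj : ℝ) * (μj : ℝ)
          * f (μ₁ + μj - 2) * b ^ ((n₁ + nj) - (μ₁ + μj)) * c ^ (μ₁ + μj)
      = c ^ 2 * (nj : ℝ) * ∑ k ∈ Finset.range ((n₁ + nj - 2) + 1),
          (Nat.choose (n₁ + nj - 2) k : ℝ) * f k * b ^ ((n₁ + nj - 2) - k) * c ^ k := by
  obtain ⟨m, rfl⟩ : ∃ m, n₁ = m + 1 := ⟨n₁ - 1, by omega⟩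
  obtain _ | n := nj
  · simp
  have absorb (a d : ℕ) :
      (m.choose a : ℝ) * (n + 1).choose (d + 1) * (d + 1 : ℕ) * f (a + 1 + (d + 1) - 2)
          * b ^ (m + 1 + (n + 1) - (a + 1 + (d + 1))) * c ^ (a + 1 + (d + 1))
        = c ^ 2 * (n + 1 : ℕ) * ((m.choose a * n.choose d : ℝ)
            * (f (a + d) * b ^ (m + n - (a + d)) * c ^ (a + d))) := by
    have h := congrArg (Nat.cast : ℕ → ℝ) (Nat.add_one_mul_choose_eq n d)
    rw [show a + 1 + (d + 1) = a + d + 2 by omega, Nat.add_sub_cancel,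
      show m + 1 + (n + 1) - (a + d + 2) = m + n - (a + d) by omega]
    push_cast at h ⊢
    linear_combination (-(m.choose a : ℝ) * f (a + d) * b ^ (m + n - (a + d)) * c ^ (a + d + 2)) * h
  simp_rw [sum_Icc_one_eq_sum_range, Nat.add_sub_cancel, absorb, ← mul_sum]
  rw [sum_range_choose_mul_choose_mul_apply_add m n fun k ↦ f k * b ^ (m + n - k) * c ^ k,
    show m + 1 + (n + 1) - 2 = m + n by omega]
  simp only [mul_assoc]

/-- The "Term I" identity in the algebraic proof of the generalized `bc`-Motzkin
recursion: for real `b, c`, any `f : ℕ → ℝ`, and natural numbers `n₁, n_j ≥ 1`,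
`∑_{μ₁=1}^{n₁} ∑_{μⱼ=1}^{n_j} binom(n₁−1,μ₁−1)·binom(n_j,μⱼ)·μⱼ·f(μ₁+μⱼ−2)·b^{(n₁+n_j)−(μ₁+μⱼ)}·c^{μ₁+μⱼ}`
`= c²·n_j·∑_{k=0}^{n₁+n_j−2} binom(n₁+n_j−2,k)·f(k)·b^{(n₁+n_j−2)−k}·c^{k}`. -/
theorem bcMotzkin_termI (b c : ℝ) (f : ℕ → ℝ) (n₁ nj : ℕ) (h₁ : 1 ≤ n₁) (hj : 1 ≤ nj) :
    ∑ μ₁ ∈ Finset.Icc 1 n₁, ∑ μj ∈ Finset.Icc 1 nj,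
        (Nat.choose (n₁ - 1) (μ₁ - 1) : ℝ) * (Nat.choose nj μj : ℝ) * (μj : ℝ)
          * f (μ₁ + μj - 2) * b ^ ((n₁ + nj) - (μ₁ + μj)) * c ^ (μ₁ + μj)
      = c ^ 2 * (nj : ℝ) * ∑ k ∈ Finset.range ((n₁ + nj - 2) + 1),
          (Nat.choose (n₁ + nj - 2) k : ℝ) * f k * b ^ ((n₁ + nj - 2) - k) * c ^ k :=
  bcMotzkin_termI_general b c f n₁ nj h₁
end

section
/- Let b, c be real numbers, let g : ℕ × ℕ → ℝ be any function, and let n ≥ 2 be a natural number. Then Σ_{μ=2}^{n} binom(n−1, μ−1)·( Σ_{α+β=μ−2} g(α,β) )·b^{n−μ}·c^{μ} = c²·Σ_{ζ+ξ=n−2} Σ_{α=0}^{ζ} Σ_{β=0}^{ξ} binom(ζ,α)·binom(ξ,β)·g(α,β)·b^{(ζ+ξ)−(α+β)}·c^{α+β}, where the sums over α+β=μ−2 and over ζ+ξ=n−2 range over pairs of nonnegative integers with the indicated sums. -/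
/-!
Both sides equal `c² ∑_{α,β ≤ n-2} C(n-1, α+β+1) g(α,β) b^(n-2-(α+β)) c^(α+β)`. On the left this
is the sum regrouped by `μ = α + β + 2`; on the right it comes from exchanging the sum over
`ζ + ξ = n - 2` with the sums over `α, β` and summing the coefficients by
`∑_{ζ+ξ=m} C(ζ,α) C(ξ,β) = C(m+1, α+β+1)`.
-/

open Finset

theorem Nat.sum_antidiagonal_choose_mul_choose (a b n : ℕ) :
    ∑ p ∈ antidiagonal n, p.1.choose a * p.2.choose b = (n + 1).choose (a + b + 1) := by
  induction n generalizing b with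
  | zero => rcases a with _ | a <;> rcases b with _ | b <;> simp [Nat.choose_eq_zero_of_lt]
  | succ n ih =>
    rw [Nat.sum_antidiagonal_succ']
    cases b with
    | zero => simpa [Nat.choose_succ_succ' (n + 1) a] using ih 0
    | succ b =>
      simp only [Nat.choose_succ_succ' _ b, mul_add, sum_add_distrib, ih]
      rw [Nat.choose_succ_succ' (n + 1) (a + (b + 1)), ← add_assoc a b 1]
      simp

theorem Finset.sum_range_sum_antidiagonal_eq_sum_product {M : Type*} [AddCommMonoid M]
    {N : ℕ} {f : ℕ × ℕ → M} (hf : ∀ q : ℕ × ℕ, N < q.1 + q.2 → f q = 0) :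
    ∑ m ∈ range (N + 1), ∑ p ∈ antidiagonal m, f p
      = ∑ q ∈ range (N + 1) ×ˢ range (N + 1), f q := by
  have fiber : ∀ m ∈ range (N + 1),
      antidiagonal m = {q ∈ range (N + 1) ×ˢ range (N + 1) | q.1 + q.2 = m} := by
    intro m hm
    ext q
    simp only [mem_range] at hm
    simp only [HasAntidiagonal.mem_antidiagonal, mem_filter, mem_product, mem_range]
    omega
  rw [sum_congr rfl fun m hm => by rw [fiber m hm], sum_fiberwise_eq_sum_filter]
  refine sum_filter_of_ne fun q _ hq => mem_range.2 ?_
  by_contra! h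
  exact hq (hf q (by omega))

theorem Finset.sum_range_sum_range_choose_mul_choose {R : Type*} [Semiring R] {i j N : ℕ}
    (hi : i ≤ N) (hj : j ≤ N) (f : ℕ × ℕ → R) :
    ∑ α ∈ range (i + 1), ∑ β ∈ range (j + 1), (i.choose α : R) * j.choose β * f (α, β)
      = ∑ q ∈ range (N + 1) ×ˢ range (N + 1), (i.choose q.1 : R) * j.choose q.2 * f q := by
  rw [← sum_product' (f := fun α β => (i.choose α : R) * j.choose β * f (α, β))]
  refine sum_subset (product_subset_product (range_subset_range.2 (by omega))
    (range_subset_range.2 (by omega))) fun q _ hq => ?_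
  simp only [mem_product, mem_range, not_and_or, not_lt] at hq
  rcases hq with hα | hβ
  · simp [Nat.choose_eq_zero_of_lt (Nat.lt_of_succ_le hα)]
  · simp [Nat.choose_eq_zero_of_lt (Nat.lt_of_succ_le hβ)]

section TermIII

variable {R : Type*} [CommSemiring R] (b c : R) (g : ℕ × ℕ → R) (N : ℕ)

theorem sum_Icc_choose_mul_sum_antidiagonal_eq_sum_product :
    ∑ μ ∈ Icc 2 (N + 2), ((N + 2 - 1).choose (μ - 1) : R)
        * (∑ p ∈ antidiagonal (μ - 2), g p) * b ^ (N + 2 - μ) * c ^ μ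
      = c ^ 2 * ∑ q ∈ range (N + 1) ×ˢ range (N + 1),
          ((N + 1).choose (q.1 + q.2 + 1) : R) * g q * b ^ (N - (q.1 + q.2)) * c ^ (q.1 + q.2) := by
  rw [← sum_range_sum_antidiagonal_eq_sum_product fun q hq => by
    simp [Nat.choose_eq_zero_of_lt (show N + 1 < q.1 + q.2 + 1 by omega)]]
  rw [← Ico_add_one_right_eq_Icc, sum_Ico_eq_sum_range, mul_sum,
    show N + 2 + 1 - 2 = N + 1 by omega]
  refine sum_congr rfl fun m _ => ?_
  rw [show N + 2 - 1 = N + 1 by omega, show 2 + m - 1 = m + 1 by omega,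
    show 2 + m - 2 = m by omega, show N + 2 - (2 + m) = N - m by omega,
    mul_sum, sum_mul, sum_mul, mul_sum]
  refine sum_congr rfl fun p hp => ?_
  rw [HasAntidiagonal.mem_antidiagonal] at hp
  simp only [hp]
  ring

theorem sum_antidiagonal_sum_range_choose_mul_choose_eq_sum_product :
    ∑ p ∈ antidiagonal N, ∑ α ∈ range (p.1 + 1), ∑ β ∈ range (p.2 + 1),
        (p.1.choose α : R) * p.2.choose β * g (α, β) * b ^ ((p.1 + p.2) - (α + β)) * c ^ (α + β)
      = ∑ q ∈ range (N + 1) ×ˢ range (N + 1),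
          ((N + 1).choose (q.1 + q.2 + 1) : R) * g q * b ^ (N - (q.1 + q.2)) * c ^ (q.1 + q.2) := by
  have extend : ∀ p ∈ antidiagonal N,
      ∑ α ∈ range (p.1 + 1), ∑ β ∈ range (p.2 + 1),
          (p.1.choose α : R) * p.2.choose β * g (α, β) * b ^ ((p.1 + p.2) - (α + β)) * c ^ (α + β)
        = ∑ q ∈ range (N + 1) ×ˢ range (N + 1), (p.1.choose q.1 : R) * p.2.choose q.2
            * (g q * b ^ (N - (q.1 + q.2)) * c ^ (q.1 + q.2)) := by
    intro p hp
    rw [HasAntidiagonal.mem_antidiagonal] at hp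
    rw [← sum_range_sum_range_choose_mul_choose (by omega) (by omega)]
    simp only [hp, mul_assoc]
  rw [sum_congr rfl extend, sum_comm]
  refine sum_congr rfl fun q _ => ?_
  simp only [← sum_mul, ← Nat.sum_antidiagonal_choose_mul_choose q.1 q.2 N]
  push_cast
  ring

end TermIII

/-- The "Term III" splitting identity in the algebraic proof of the generalized
`bc`-Motzkin recursion: for real `b, c`, any `g : ℕ × ℕ → ℝ`, and `n ≥ 2`,
`∑_{μ=2}^{n} binom(n−1,μ−1)·(∑_{α+β=μ−2} g(α,β))·b^{n−μ}·c^{μ}`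
`= c²·∑_{ζ+ξ=n−2} ∑_{α=0}^{ζ} ∑_{β=0}^{ξ} binom(ζ,α)·binom(ξ,β)·g(α,β)·b^{(ζ+ξ)−(α+β)}·c^{α+β}`. -/
theorem bcMotzkin_termIII (b c : ℝ) (g : ℕ × ℕ → ℝ) (n : ℕ) (hn : 2 ≤ n) :
    ∑ μ ∈ Finset.Icc 2 n,
        (Nat.choose (n - 1) (μ - 1) : ℝ)
          * (∑ p ∈ Finset.HasAntidiagonal.antidiagonal (μ - 2), g p) * b ^ (n - μ) * c ^ μ
      = c ^ 2 * ∑ p ∈ Finset.HasAntidiagonal.antidiagonal (n - 2),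
          ∑ α ∈ Finset.range (p.1 + 1), ∑ β ∈ Finset.range (p.2 + 1),
            (Nat.choose p.1 α : ℝ) * (Nat.choose p.2 β : ℝ) * g (α, β)
              * b ^ ((p.1 + p.2) - (α + β)) * c ^ (α + β) := by
  obtain ⟨N, rfl⟩ : ∃ N, n = N + 2 := ⟨n - 2, by omega⟩
  rw [sum_Icc_choose_mul_sum_antidiagonal_eq_sum_product, Nat.add_sub_cancel,
    sum_antidiagonal_sum_range_choose_mul_choose_eq_sum_product]
end

section
/- Let b, c be real numbers. Define the aerated Catalan numbers C₀₁ : ℕ → ℕ by C₀₁(μ) = Catalan(μ/2) if μ is even and C₀₁(μ) = 0 if μ is odd, where Catalan(k) is the k-th Catalan number, and define the (0,1)-bc-Motzkin numbers by M̃₀₁(n;b,c) = Σ_{μ=0}^{n} binom(n,μ)·C₀₁(μ)·b^{n−μ}·c^{μ}. Let G ∈ ℝ[[z]] be the formal power series whose n-th coefficient is M̃₀₁(n;b,c). Then G satisfies the quadratic equation G = 1 + b·z·G + c²·z²·G², equivalently c²·z²·G² + (b·z − 1)·G + 1 = 0, as an identity of formal power series. -/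
/-- The generating function of the `(0,1)`-`bc`-Motzkin numbers: the formal power
series over `ℝ` whose `n`-th coefficient is `M̃₀₁(n;b,c)`. -/
noncomputable def bcMotzkinGF (b c : ℝ) : PowerSeries ℝ :=
  PowerSeries.mk (fun n => bcMotzkin01 b c n)

/-!
With `W = 1 / (1 - bX)`, the sequence `n ↦ ∑ μ, binom(n, μ) a_μ b^(n-μ)` has generating
function `W · A(X W)`, where `A = ∑ a_μ X^μ`. For `a_μ = C₀₁(μ) c^μ` we have `A(w) = Cat(c² w²)`,
so the Catalan equation gives `A = 1 + c² X² A²`. Substituting `X W` for `X`, `H = A(X W)` satisfies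
`H = 1 + c² X² W² H²`, and since `G = W H` and `(1 - bX) W = 1`, this reads
`(1 - bX) G = 1 + c² X² G²`.
-/

open PowerSeries

namespace PowerSeries

variable {R : Type*} [CommRing R]

theorem one_sub_C_mul_X_mul_rescale_mk_one (b : R) : (1 - C b * X) * rescale b (mk 1) = 1 := by
  simpa [mul_comm, rescale_X] using congr(rescale b $(mk_one_mul_one_sub_eq_one R))

theorem coeff_rescale_mk_one_mul_X_mul_pow (b : R) (d n : ℕ) :
    coeff n (rescale b (mk 1) * (X * rescale b (mk 1)) ^ d) = n.choose d * b ^ (n - d) := by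
  rw [show rescale b (mk 1) * (X * rescale b (mk 1)) ^ d = X ^ d * rescale b (mk 1) ^ (d + 1) by
      ring,
    ← map_pow, mk_one_pow_eq_mk_choose_add, rescale_mk, coeff_X_pow_mul', coeff_mk]
  split_ifs with h
  · rw [Nat.add_sub_cancel' h, mul_comm]
  · simp [Nat.choose_eq_zero_of_lt (not_le.mp h)]

theorem hasSubst_X_mul (g : R⟦X⟧) : HasSubst (X * g) :=
  HasSubst.of_constantCoeff_zero' (by simp)

theorem coeff_mul_subst {u : R⟦X⟧} (hu : HasSubst u) (g f : R⟦X⟧) (n : ℕ) :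
    coeff n (g * f.subst u) = ∑ᶠ d, coeff d f * coeff n (g * u ^ d) := by
  have hfin (e : ℕ) := coeff_subst_finite' hu f e
  simp only [smul_eq_mul] at hfin
  simp only [coeff_mul, coeff_subst' hu, smul_eq_mul, Finset.mul_sum]
  rw [Finset.sum_congr rfl fun p _ => mul_finsum' _ _ (hfin p.2),
    sum_finsum_comm _ _ fun p _ => (hfin p.2).fun_mul_right _]
  exact finsum_congr fun d => Finset.sum_congr rfl fun p _ => by ring

theorem mk_binomialTransform (b : R) (a : ℕ → R) :
    mk (fun n => ∑ μ ∈ Finset.range (n + 1), n.choose μ * a μ * b ^ (n - μ))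
      = rescale b (mk 1) * (mk a).subst (X * rescale b (mk 1)) := by
  ext n
  simp only [coeff_mk, coeff_mul_subst (hasSubst_X_mul _), coeff_rescale_mk_one_mul_X_mul_pow]
  refine ((finsum_eq_sum_of_support_subset _ fun d hd => Finset.mem_range.2 ?_).trans
    (Finset.sum_congr rfl fun d _ => by ring)).symm
  by_contra! hnd
  exact hd (by simp [Nat.choose_eq_zero_of_lt (Nat.lt_of_succ_le hnd)])

theorem subst_eq_one_add_C_mul_sq {F : R⟦X⟧} {r : R} (hF : F = 1 + C r * X ^ 2 * F ^ 2)
    {u : R⟦X⟧} (hu : HasSubst u) :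
    F.subst u = 1 + C r * u ^ 2 * (F.subst u) ^ 2 := by
  conv_lhs => rw [hF]
  have hC : substAlgHom hu (C r) = C r := (substAlgHom hu).commutes r
  rw [← coe_substAlgHom hu]
  simp only [map_add, map_mul, map_pow, map_one, hC, substAlgHom_X]

end PowerSeries

section AeratedCatalan

variable {R : Type*} [CommRing R]

theorem mk_aeratedCatalan_eq_expand_catalanSeries :
    (mk fun μ => (aeratedCatalan μ : R))
      = expand 2 two_ne_zero (catalanSeries.map (Nat.castRingHom R)) := by
  ext μ
  by_cases h : 2 ∣ μ <;> simp [coeff_expand, aeratedCatalan, even_iff_two_dvd, h]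

theorem mk_aeratedCatalan_eq_one_add_X_sq_mul_sq :
    (mk fun μ => (aeratedCatalan μ : R))
      = 1 + X ^ 2 * (mk fun μ => (aeratedCatalan μ : R)) ^ 2 := by
  have h := congr(expand 2 two_ne_zero (map (Nat.castRingHom R) $(catalanSeries_sq_mul_X_add_one)))
  simp only [map_add, map_mul, map_pow, map_one, map_X, expand_X] at h
  rw [mk_aeratedCatalan_eq_expand_catalanSeries]
  linear_combination -h

end AeratedCatalan

theorem bcMotzkinGF_eq_mul_subst (b c : ℝ) :
    bcMotzkinGF b c = rescale b (mk 1)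
      * (rescale c (mk fun μ => (aeratedCatalan μ : ℝ))).subst (X * rescale b (mk 1)) := by
  rw [bcMotzkinGF, rescale_mk _ c, ← mk_binomialTransform]
  congr! 2 with n
  exact Finset.sum_congr rfl fun μ _ => by ring

/-- The generating function `G` of the `(0,1)`-`bc`-Motzkin numbers satisfies the
quadratic equation `G = 1 + b·z·G + c²·z²·G²`, equivalently
`c²·z²·G² + (b·z − 1)·G + 1 = 0`, as an identity of formal power series. -/
theorem bcMotzkinGF_quadratic (b c : ℝ) :
    bcMotzkinGF b c
        = 1 + PowerSeries.C b * PowerSeries.X * bcMotzkinGF b c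
            + PowerSeries.C (c ^ 2) * PowerSeries.X ^ 2 * (bcMotzkinGF b c) ^ 2
    ∧ PowerSeries.C (c ^ 2) * PowerSeries.X ^ 2 * (bcMotzkinGF b c) ^ 2
        + (PowerSeries.C b * PowerSeries.X - 1) * bcMotzkinGF b c + 1 = 0 := by
  rw [bcMotzkinGF_eq_mul_subst]
  set A := rescale c (mk fun μ => (aeratedCatalan μ : ℝ))
  set W := rescale b (mk (1 : ℕ → ℝ))
  set H := A.subst (X * W)
  have hW : (1 - C b * X) * W = 1 := one_sub_C_mul_X_mul_rescale_mk_one b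
  have hA : A = 1 + C (c ^ 2) * X ^ 2 * A ^ 2 := by
    simpa [rescale_X, mul_pow] using congr(rescale c $(mk_aeratedCatalan_eq_one_add_X_sq_mul_sq))
  have hH : H = 1 + C (c ^ 2) * (X * W) ^ 2 * H ^ 2 :=
    subst_eq_one_add_C_mul_sq hA (hasSubst_X_mul W)
  constructor
  · linear_combination H * hW + hH
  · linear_combination -H * hW - hH
end

section
/- Let b, c be real numbers with c ≠ 0, and define x(t) = 2c·(t²+1)/(t²−1) + b for real (or complex) t with t² ≠ 1, so that x'(t) = −8ct/(t²−1)². Then for all t₁, t₂ with t₁² ≠ 1, t₂² ≠ 1, t₁ ≠ t₂, and t₁ ≠ −t₂: (x'(t₁)·x'(t₂))/((x(t₁)−x(t₂))²) = 1/(t₁−t₂)² − 1/(t₁+t₂)². Equivalently, 1/(t₁−t₂)² − (x'(t₁)·x'(t₂))/((x(t₁)−x(t₂))²) = 1/(t₁+t₂)². -/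
/-- The spectral-curve change of variable `x(t) = 2c·(t²+1)/(t²−1) + b`. -/
noncomputable def xSpec (b c t : ℝ) : ℝ := 2 * c * (t ^ 2 + 1) / (t ^ 2 - 1) + b

/-- The derivative `x'(t) = −8ct/(t²−1)²` of the change of variable. -/
noncomputable def xSpecDeriv (c t : ℝ) : ℝ := -8 * c * t / (t ^ 2 - 1) ^ 2

/-!
Since `x = b + 2c + 4c/(t² − 1)` is a Möbius transformation of `u = t²`, and the kernel
`dx₁ dx₂/(x₁ − x₂)²` is Möbius invariant, it equals `du₁ du₂/(u₁ − u₂)² = 4t₁t₂/(t₁² − t₂²)²`,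
whose partial fraction decomposition is `1/(t₁ − t₂)² − 1/(t₁ + t₂)²`.
-/

theorem hasDerivAt_xSpec (b c : ℝ) {t : ℝ} (ht : t ^ 2 ≠ 1) :
    HasDerivAt (xSpec b c) (xSpecDeriv c t) t := by
  have hden : t ^ 2 - 1 ≠ 0 := sub_ne_zero.mpr ht
  have hnum : HasDerivAt (fun s : ℝ => 2 * c * (s ^ 2 + 1)) (2 * c * (2 * t)) t := by
    simpa using ((hasDerivAt_pow 2 t).add_const 1).const_mul (2 * c)
  have hden' : HasDerivAt (fun s : ℝ => s ^ 2 - 1) (2 * t) t := by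
    simpa using (hasDerivAt_pow 2 t).sub_const 1
  refine ((hnum.div hden' hden).add_const b).congr_deriv ?_
  unfold xSpecDeriv
  field_simp
  ring

theorem xSpec_sub_xSpec (b c : ℝ) {t₁ t₂ : ℝ} (h₁ : t₁ ^ 2 ≠ 1) (h₂ : t₂ ^ 2 ≠ 1) :
    xSpec b c t₁ - xSpec b c t₂ = -4 * c * (t₁ ^ 2 - t₂ ^ 2) / ((t₁ ^ 2 - 1) * (t₂ ^ 2 - 1)) := by
  have d₁ : t₁ ^ 2 - 1 ≠ 0 := sub_ne_zero.mpr h₁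
  have d₂ : t₂ ^ 2 - 1 ≠ 0 := sub_ne_zero.mpr h₂
  unfold xSpec
  field_simp
  ring

theorem xSpecDeriv_mul_div_sq_xSpec_sub (b : ℝ) {c t₁ t₂ : ℝ} (hc : c ≠ 0)
    (h₁ : t₁ ^ 2 ≠ 1) (h₂ : t₂ ^ 2 ≠ 1) (h₁₂ : t₁ ^ 2 ≠ t₂ ^ 2) :
    xSpecDeriv c t₁ * xSpecDeriv c t₂ / (xSpec b c t₁ - xSpec b c t₂) ^ 2
      = 4 * t₁ * t₂ / (t₁ ^ 2 - t₂ ^ 2) ^ 2 := by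
  have d₁ : t₁ ^ 2 - 1 ≠ 0 := sub_ne_zero.mpr h₁
  have d₂ : t₂ ^ 2 - 1 ≠ 0 := sub_ne_zero.mpr h₂
  have d₁₂ : t₁ ^ 2 - t₂ ^ 2 ≠ 0 := sub_ne_zero.mpr h₁₂
  rw [xSpec_sub_xSpec b c h₁ h₂]
  unfold xSpecDeriv
  field_simp
  ring

theorem four_mul_div_sq_sub_sq_eq {t₁ t₂ : ℝ} (h₁₂ : t₁ ≠ t₂) (h₁₂' : t₁ ≠ -t₂) :
    4 * t₁ * t₂ / (t₁ ^ 2 - t₂ ^ 2) ^ 2 = 1 / (t₁ - t₂) ^ 2 - 1 / (t₁ + t₂) ^ 2 := by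
  have hm : t₁ - t₂ ≠ 0 := sub_ne_zero.mpr h₁₂
  have hp : t₁ + t₂ ≠ 0 := by rwa [← sub_neg_eq_add, sub_ne_zero]
  rw [sq_sub_sq]
  field_simp
  ring

/-- For `x(t) = 2c·(t²+1)/(t²−1) + b` with `c ≠ 0` one has
`x'(t) = −8ct/(t²−1)²`, and for all `t₁, t₂` with `t₁² ≠ 1`, `t₂² ≠ 1`,
`t₁ ≠ t₂`, `t₁ ≠ −t₂`:
`(x'(t₁)·x'(t₂))/((x(t₁)−x(t₂))²) = 1/(t₁−t₂)² − 1/(t₁+t₂)²`, equivalently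
`1/(t₁−t₂)² − (x'(t₁)·x'(t₂))/((x(t₁)−x(t₂))²) = 1/(t₁+t₂)²`. -/
theorem pulled_back_cauchy_kernel (b c : ℝ) (hc : c ≠ 0) (t₁ t₂ : ℝ)
    (h₁ : t₁ ^ 2 ≠ 1) (h₂ : t₂ ^ 2 ≠ 1) (h₁₂ : t₁ ≠ t₂) (h₁₂' : t₁ ≠ -t₂) :
    (∀ t : ℝ, t ^ 2 ≠ 1 → HasDerivAt (fun s => xSpec b c s) (xSpecDeriv c t) t)
    ∧ (xSpecDeriv c t₁ * xSpecDeriv c t₂) / (xSpec b c t₁ - xSpec b c t₂) ^ 2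
        = 1 / (t₁ - t₂) ^ 2 - 1 / (t₁ + t₂) ^ 2
    ∧ 1 / (t₁ - t₂) ^ 2
        - (xSpecDeriv c t₁ * xSpecDeriv c t₂) / (xSpec b c t₁ - xSpec b c t₂) ^ 2
        = 1 / (t₁ + t₂) ^ 2 := by
  have hsq : t₁ ^ 2 ≠ t₂ ^ 2 := fun h => (sq_eq_sq_iff_eq_or_eq_neg.mp h).elim h₁₂ h₁₂'
  have key : (xSpecDeriv c t₁ * xSpecDeriv c t₂) / (xSpec b c t₁ - xSpec b c t₂) ^ 2
      = 1 / (t₁ - t₂) ^ 2 - 1 / (t₁ + t₂) ^ 2 := by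
    rw [xSpecDeriv_mul_div_sq_xSpec_sub b hc h₁ h₂ hsq, four_mul_div_sq_sub_sq_eq h₁₂ h₁₂']
  exact ⟨fun t ht => hasDerivAt_xSpec b c ht, key, by rw [key]; ring⟩
end
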